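/- arXiv:2303.02409 — 3 statements merged into one kernel-verified Lean document; each statement's English description precedes it below -/
import Mathlib

section
/- The principal ideal of 𝓞 generated by γ + 2 is a maximal (in particular prime) ideal, and the residue ring 𝓞/(γ+2) is a finite field with exactly p elements. -/
/-!
Put `η = -ζ`, a primitive `p`-th root of unity. Then `γ + 2 = (η - 1)(η⁻¹ - 1)`, whose norm from
`ℚ(η)` to `ℚ` is `p²`. The subfield `ℚ(γ)` is proper, because the embedding `ℚ(η) → K` sending
`η ↦ η⁻¹` fixes `γ` but not `η`. Hence the norm `N` of `γ + 2` from `ℚ(γ)` satisfies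
`N ^ [ℚ(η) : ℚ(γ)] = p²` with an exponent other than `1`, which forces `N = ±p`. An algebraic
integer whose norm is a prime generates a maximal ideal of that index.
-/

open IntermediateField Polynomial
open scoped NumberField

theorem Ideal.isMaximal_of_absNorm_prime {S : Type*} [CommRing S] [IsDedekindDomain S]
    [Module.Free ℤ S] {I : Ideal S} (hI : (absNorm I).Prime) : I.IsMaximal := by
  refine (isPrime_of_irreducible_absNorm hI).isMaximal ?_
  rintro rfl
  exact Nat.not_prime_zero (by simpa using hI)

theorem Ideal.isMaximal_span_singleton_of_prime_natAbs_norm {S : Type*} [CommRing S]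
    [IsDedekindDomain S] [Module.Free ℤ S] [Module.Finite ℤ S] {x : S}
    (hx : (Algebra.norm ℤ x).natAbs.Prime) : (span {x}).IsMaximal :=
  isMaximal_of_absNorm_prime (by rwa [absNorm_span_singleton])

theorem Ideal.natCard_quotient_span_singleton {S : Type*} [CommRing S] [IsDedekindDomain S]
    [Module.Free ℤ S] [Module.Finite ℤ S] (x : S) :
    Nat.card (S ⧸ span {x}) = (Algebra.norm ℤ x).natAbs := by
  rw [← absNorm_span_singleton, absNorm_apply, Submodule.cardQuot_apply]

theorem Int.natAbs_eq_of_pow_eq_prime_sq {n : ℤ} {d p : ℕ} (hp : p.Prime) (hd : d ≠ 1)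
    (h : n ^ d = (p : ℤ) ^ 2) : n.natAbs = p := by
  have hm : n.natAbs ^ d = p ^ 2 := by simpa using congrArg Int.natAbs h
  have hd0 : d ≠ 0 := by
    rintro rfl
    have := hp.one_lt
    nlinarith
  obtain ⟨i, hi, hni⟩ := (Nat.dvd_prime_pow hp).1 (hm ▸ dvd_pow_self _ hd0)
  rw [hni, ← pow_mul] at hm
  have hid : i * d = 2 := Nat.pow_right_injective hp.two_le hm
  have hi1 : i = 1 := by interval_cases i <;> omega
  rw [hni, hi1, pow_one]

theorem IntermediateField.norm_inclusion {k K : Type*} [Field k] [Field K] [Algebra k K]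
    {F E : IntermediateField k K} (h : F ≤ E) [FiniteDimensional k E] (a : F) :
    Algebra.norm k (inclusion h a) = Algebra.norm k a ^ relfinrank F E := by
  have : FiniteDimensional k (extendScalars h) := ‹FiniteDimensional k E›
  have : FiniteDimensional k F := .left k F (extendScalars h)
  have : FiniteDimensional F (extendScalars h) := .right k F (extendScalars h)
  have : Module.Free F (extendScalars h) := .of_divisionRing F _
  rw [relfinrank_eq_finrank_of_le h, ← map_pow, ← Algebra.norm_algebraMap (S := extendScalars h),
    Algebra.norm_norm]
  rfl

theorem IsPrimitiveRoot.neg_of_two_mul {R : Type*} [CommRing R] [NoZeroDivisors R] {ζ : R}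
    {p : ℕ} (hζ : IsPrimitiveRoot ζ (2 * p)) (hp : Odd p) : IsPrimitiveRoot (-ζ) p := by
  have hsq : IsPrimitiveRoot (ζ ^ 2) p := hζ.pow (by have := hp.pos; omega) rfl
  have hζp : ζ ^ p = -1 := by
    refine IsPrimitiveRoot.eq_neg_one_of_two_right ?_
    simpa [Nat.mul_div_cancel _ hp.pos] using hζ.pow_of_dvd hp.pos.ne' (dvd_mul_left p 2)
  refine ⟨by rw [neg_pow, hp.neg_one_pow, hζp, neg_one_mul, neg_neg], fun l hl ↦ ?_⟩
  refine hsq.dvd_of_pow_eq_one l ?_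
  rw [← neg_sq, ← pow_mul, mul_comm, pow_mul, hl, one_pow]

theorem IsPrimitiveRoot.notMem_adjoin_add_inv {K : Type*} [Field K] [CharZero K] {ζ : K}
    {n : ℕ} (hζ : IsPrimitiveRoot ζ n) (hn : 2 < n) : ζ ∉ ℚ⟮ζ + ζ⁻¹⟯ := by
  intro hmem
  have hint : IsIntegral ℚ ζ := (hζ.isIntegral (by omega)).tower_top
  have hroot : ζ⁻¹ ∈ (minpoly ℚ ζ).aroots K := by
    rw [← cyclotomic_eq_minpoly_rat hζ (by omega), mem_aroots, aeval_def, eval₂_eq_eval_map,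
      map_cyclotomic]
    exact ⟨cyclotomic_ne_zero _ _, hζ.inv.isRoot_cyclotomic (by omega)⟩
  set σ := (algHomAdjoinIntegralEquiv ℚ hint).symm ⟨ζ⁻¹, hroot⟩
  have hσ : σ (AdjoinSimple.gen ℚ ζ) = ζ⁻¹ := algHomAdjoinIntegralEquiv_symm_apply_gen ℚ hint _
  have hle : ℚ⟮ζ + ζ⁻¹⟯ ≤ ℚ⟮ζ⟯ := adjoin_simple_le_iff.2 <|
    add_mem (mem_adjoin_simple_self ℚ ζ) (inv_mem (mem_adjoin_simple_self ℚ ζ))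
  have hfix : σ.comp (inclusion hle) = ℚ⟮ζ + ζ⁻¹⟯.val := by
    refine adjoin_algHom_ext ℚ fun x hx ↦ ?_
    obtain rfl := Set.mem_singleton_iff.1 hx
    change σ (AdjoinSimple.gen ℚ ζ + (AdjoinSimple.gen ℚ ζ)⁻¹) = ζ + ζ⁻¹
    rw [map_add, map_inv₀, hσ, inv_inv, add_comm]
  have hinv : ζ⁻¹ = ζ := by
    have := DFunLike.congr_fun hfix ⟨ζ, hmem⟩
    rw [AlgHom.comp_apply] at this
    rwa [← hσ]
  have hsq : ζ ^ 2 = 1 := by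
    rw [sq]
    nth_rw 1 [← hinv]
    exact inv_mul_cancel₀ (hζ.ne_zero (by omega))
  exact absurd (Nat.le_of_dvd two_pos (hζ.dvd_of_pow_eq_one 2 hsq)) (by omega)

theorem IsPrimitiveRoot.isCyclotomicExtension_adjoin {K : Type*} [Field K] [CharZero K] {n : ℕ}
    [NeZero n] {η : K} (hη : IsPrimitiveRoot η n) : IsCyclotomicExtension {n} ℚ ℚ⟮η⟯ := by
  change IsCyclotomicExtension {n} ℚ ℚ⟮η⟯.toSubalgebra
  rw [adjoin_simple_toSubalgebra_of_isAlgebraic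
    (hη.isIntegral (NeZero.pos n)).tower_top.isAlgebraic]
  exact hη.adjoin_isCyclotomicExtension ℚ

theorem IsPrimitiveRoot.norm_two_sub_add_inv {p : ℕ} [Fact p.Prime] {L : Type*} [Field L]
    [CharZero L] [IsCyclotomicExtension {p} ℚ L] {η : L} (hη : IsPrimitiveRoot η p)
    (hp : p ≠ 2) : Algebra.norm ℚ (2 - (η + η⁻¹)) = (p : ℚ) ^ 2 := by
  have hirr := cyclotomic.irreducible_rat (Fact.out : p.Prime).pos
  have hη0 : η ≠ 0 := hη.ne_zero (Fact.out : p.Prime).ne_zero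
  have hfac : 2 - (η + η⁻¹) = (η - 1) * (η⁻¹ - 1) := by field_simp; ring
  rw [hfac, map_mul, hη.norm_sub_one_of_prime_ne_two' hirr hp,
    hη.inv.norm_sub_one_of_prime_ne_two' hirr hp, sq]

theorem IntermediateField.adjoin_add_inv_le_adjoin_neg (F : Type*) {K : Type*} [Field F]
    [Field K] [Algebra F K] (ζ : K) : F⟮ζ + ζ⁻¹⟯ ≤ F⟮-ζ⟯ := by
  rw [adjoin_simple_le_iff, show ζ + ζ⁻¹ = -(-ζ + (-ζ)⁻¹) by rw [inv_neg]; ring]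
  exact neg_mem (add_mem (mem_adjoin_simple_self F _) (inv_mem (mem_adjoin_simple_self F _)))

theorem IsPrimitiveRoot.norm_add_inv_add_two_pow_relfinrank {p : ℕ} [Fact p.Prime] (hodd : Odd p)
    {K : Type*} [Field K] [CharZero K] {ζ : K} (hζ : IsPrimitiveRoot ζ (2 * p))
    (y : ℚ⟮ζ + ζ⁻¹⟯) (hy : (y : K) = ζ + ζ⁻¹ + 2) :
    Algebra.norm ℚ y ^ relfinrank ℚ⟮ζ + ζ⁻¹⟯ ℚ⟮-ζ⟯ = (p : ℚ) ^ 2 := by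
  have hη : IsPrimitiveRoot (-ζ) p := hζ.neg_of_two_mul hodd
  have : IsCyclotomicExtension {p} ℚ ℚ⟮-ζ⟯ := hη.isCyclotomicExtension_adjoin
  have : FiniteDimensional ℚ ℚ⟮-ζ⟯ := IsCyclotomicExtension.finiteDimensional {p} ℚ _
  have hgen : IsPrimitiveRoot (AdjoinSimple.gen ℚ (-ζ)) p :=
    IsPrimitiveRoot.coe_submonoidClass_iff.1 hη
  refine (norm_inclusion (adjoin_add_inv_le_adjoin_neg ℚ ζ) y).symm.trans ?_
  rw [← hgen.norm_two_sub_add_inv (by rintro rfl; norm_num at hodd)]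
  congr 1
  ext
  change (y : K) = 2 - (-ζ + (-ζ)⁻¹)
  rw [hy, inv_neg]
  ring

/-- Let `p` be an odd prime, `ζ` a primitive `2p`-th root of unity (in a
field of characteristic zero), `γ := ζ + ζ⁻¹` and let `𝓞` be the ring of integers of `ℚ(γ)`
(realized as the integral closure of `ℤ` in `ℚ⟮γ⟯`).  Then the principal ideal of `𝓞`
generated by `γ + 2` is a maximal (in particular prime) ideal, and the residue ring
`𝓞/(γ+2)` is a finite field with exactly `p` elements. -/
theorem stmt0 {p : ℕ} (hp : p.Prime) (hodd : Odd p)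
    {K : Type*} [Field K] [CharZero K]
    (ζ : K) (hζ : IsPrimitiveRoot ζ (2 * p))
    (x : ↥(integralClosure ℤ ↥(ℚ⟮ζ + ζ⁻¹⟯)))
    (hx : ((x : ↥(ℚ⟮ζ + ζ⁻¹⟯)) : K) = (ζ + ζ⁻¹) + 2) :
    (Ideal.span {x}).IsMaximal ∧ (Ideal.span {x}).IsPrime ∧
      IsField (↥(integralClosure ℤ ↥(ℚ⟮ζ + ζ⁻¹⟯)) ⧸ Ideal.span {x}) ∧
      Nat.card (↥(integralClosure ℤ ↥(ℚ⟮ζ + ζ⁻¹⟯)) ⧸ Ideal.span {x}) = p := by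
  have : Fact p.Prime := ⟨hp⟩
  have h2p : 2 < 2 * p := by have := hp.two_le; omega
  have hint : IsIntegral ℚ (ζ + ζ⁻¹) :=
    ((hζ.isIntegral (by omega)).add (hζ.inv.isIntegral (by omega))).tower_top
  have : NumberField ℚ⟮ζ + ζ⁻¹⟯ := { to_finiteDimensional := adjoin.finiteDimensional hint }
  have hd : relfinrank ℚ⟮ζ + ζ⁻¹⟯ ℚ⟮-ζ⟯ ≠ 1 := fun h ↦ hζ.notMem_adjoin_add_inv h2p <|
    neg_mem_iff.1 (relfinrank_eq_one_iff.1 h (mem_adjoin_simple_self ℚ (-ζ)))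
  have hN : (Algebra.norm ℤ (x : 𝓞 ℚ⟮ζ + ζ⁻¹⟯)).natAbs = p :=
    Int.natAbs_eq_of_pow_eq_prime_sq hp hd <| by
      exact_mod_cast (Algebra.coe_norm_int (x : 𝓞 ℚ⟮ζ + ζ⁻¹⟯)).symm ▸
        hζ.norm_add_inv_add_two_pow_relfinrank hodd _ hx
  have hmax := Ideal.isMaximal_span_singleton_of_prime_natAbs_norm (S := 𝓞 ℚ⟮ζ + ζ⁻¹⟯) (hN ▸ hp)
  exact ⟨hmax, hmax.isPrime, (Ideal.Quotient.maximal_ideal_iff_isField_quotient _).1 hmax,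
    (Ideal.natCard_quotient_span_singleton (S := 𝓞 ℚ⟮ζ + ζ⁻¹⟯) x).trans hN⟩
end

section
/- For every integer k with 0 < k < p, the element u_k := ζ^k + ζ^{−k} + (−1)^k·2 lies in 𝓞 and is a unit of 𝓞. -/
/-! With `x := (-ζ)^k`, a `p`-th root of unity other than `1`, one has
`u_k = ζ^{-k} (1 + x)^2`. As `p` is odd, `1 + x` is invertible over `ℤ[x]`: multiplied by
`∑_{i < (p+1)/2} x^{2i}` it gives `1 + x + ⋯ + x^p`, which is `x^p = 1` since
`1 + x + ⋯ + x^{p-1} = 0`. So `u_k` and `u_k⁻¹` are integral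
over `ℤ`, and `u_k ∈ ℚ(γ)` because `ζ^k + ζ^{-k}` is a Dickson polynomial in `γ`. -/
open IntermediateField Finset Polynomial

theorem IsPrimitiveRoot.neg_of_odd {R : Type*} [CommRing R] [NoZeroDivisors R] {ζ : R} {n : ℕ}
    (h : IsPrimitiveRoot ζ (2 * n)) (hn : Odd n) : IsPrimitiveRoot (-ζ) n := by
  have hζn : ζ ^ n = -1 :=
    (h.pow (by have := hn.pos; omega) (mul_comm 2 n)).eq_neg_one_of_two_right
  refine ⟨by rw [neg_pow, hn.neg_one_pow, hζn, neg_one_mul, neg_neg], fun l hl => ?_⟩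
  have h2l : ζ ^ (2 * l) = 1 := by rw [pow_mul, ← neg_sq, ← pow_mul, mul_comm, pow_mul, hl, one_pow]
  exact (Nat.mul_dvd_mul_iff_left two_pos).mp (h.dvd_of_pow_eq_one _ h2l)

theorem geom_sum_eq_zero_of_pow_eq_one {R : Type*} [Ring R] [NoZeroDivisors R] {x : R} {n : ℕ}
    (hx : x ^ n = 1) (hx1 : x ≠ 1) : ∑ i ∈ range n, x ^ i = 0 :=
  (mul_eq_zero.mp (by rw [geom_sum_mul, hx, sub_self])).resolve_right (sub_ne_zero.mpr hx1)

theorem one_add_mul_geom_sum_sq {R : Type*} [CommSemiring R] (x : R) (m : ℕ) :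
    (1 + x) * ∑ i ∈ range m, (x ^ 2) ^ i = ∑ i ∈ range (2 * m), x ^ i := by
  induction m with
  | zero => simp
  | succ m ih =>
    rw [sum_range_succ, mul_add, ih, mul_add 2 m 1, sum_range_succ, sum_range_succ, ← pow_mul]
    ring

theorem one_add_mul_geom_sum_sq_eq_one {R : Type*} [CommRing R] [NoZeroDivisors R] {x : R} {n : ℕ}
    (hn : Odd n) (hx : x ^ n = 1) (hx1 : x ≠ 1) :
    (1 + x) * ∑ i ∈ range ((n + 1) / 2), (x ^ 2) ^ i = 1 := by
  have hn' : 2 * ((n + 1) / 2) = n + 1 := by obtain ⟨r, rfl⟩ := hn; omega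
  rw [one_add_mul_geom_sum_sq, hn', sum_range_succ, hx, geom_sum_eq_zero_of_pow_eq_one hx hx1,
    zero_add]

theorem pow_add_pow_mem_of_mul_eq_one {R S : Type*} [CommRing R] [SetLike S R] [SubringClass S R]
    {s : S} {x y : R} (hxy : x * y = 1) (h : x + y ∈ s) (n : ℕ) : x ^ n + y ^ n ∈ s := by
  -- the Dickson polynomial over `R` is the image of the one over `ℤ`, so its coefficients lie in `s`
  rw [← dickson_one_one_eval_add_inv x y hxy n, ← Int.cast_one, ← eq_intCast (Int.castRingHom R),
    ← map_dickson, eval_map, eval₂_eq_sum_range]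
  exact sum_mem fun i _ => mul_mem (intCast_mem s _) (pow_mem h i)

theorem pow_add_pow_add_neg_one_pow_mul_two {R : Type*} [CommRing R] {x y : R} (hxy : x * y = 1)
    (k : ℕ) : x ^ k + y ^ k + (-1) ^ k * 2 = y ^ k * (1 + (-x) ^ k) ^ 2 := by
  have hxyk : x ^ k * y ^ k = 1 := by rw [← mul_pow, hxy, one_pow]
  have hsq : ((-1 : R) ^ k) ^ 2 = 1 := by rw [← pow_mul, pow_mul', neg_one_sq, one_pow]
  rw [neg_pow]
  linear_combination (-2 * (-1) ^ k - x ^ k * ((-1) ^ k) ^ 2) * hxyk - x ^ k * hsq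

theorem IntermediateField.exists_isUnit_integralClosure_of_mul_eq_one {k K : Type*} [Field k]
    [Field K] [Algebra k K] (F : IntermediateField k K) {u w : K} (huF : u ∈ F)
    (hu : IsIntegral ℤ u) (hw : IsIntegral ℤ w) (huw : u * w = 1) :
    ∃ v : integralClosure ℤ F, ((v : F) : K) = u ∧ IsUnit v := by
  have hwF : w ∈ F := by
    rw [eq_inv_of_mul_eq_one_right huw]
    exact inv_mem huF
  have hinj : Function.Injective (algebraMap F K) := (algebraMap F K).injective
  refine ⟨⟨⟨u, huF⟩, (isIntegral_algebraMap_iff hinj).mp hu⟩, rfl, ?_⟩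
  exact IsUnit.of_mul_eq_one ⟨⟨w, hwF⟩, (isIntegral_algebraMap_iff hinj).mp hw⟩
    (Subtype.ext (Subtype.ext huw))

theorem stmt1_general {p : ℕ} (hodd : Odd p)
    {K : Type*} [Field K] [CharZero K]
    (ζ : K) (hζ : IsPrimitiveRoot ζ (2 * p))
    (k : ℕ) (hk0 : 0 < k) (hkp : k < p) :
    ∃ u : ↥(integralClosure ℤ ↥(ℚ⟮ζ + ζ⁻¹⟯)),
      ((u : ↥(ℚ⟮ζ + ζ⁻¹⟯)) : K) = ζ ^ k + ζ⁻¹ ^ k + (-1) ^ k * 2 ∧ IsUnit u := by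
  have hζ0 : ζ ≠ 0 := hζ.ne_zero (by omega)
  have hζζ' : ζ * ζ⁻¹ = 1 := mul_inv_cancel₀ hζ0
  have hnegζ : IsPrimitiveRoot (-ζ) p := hζ.neg_of_odd hodd
  set S := ∑ i ∈ range ((p + 1) / 2), (((-ζ) ^ k) ^ 2) ^ i
  have hS : (1 + (-ζ) ^ k) * S = 1 :=
    one_add_mul_geom_sum_sq_eq_one hodd (by rw [pow_right_comm, hnegζ.pow_eq_one, one_pow])
      (hnegζ.pow_ne_one_of_pos_of_lt hk0.ne' hkp)
  have hζint : IsIntegral ℤ ζ := hζ.isIntegral (by omega)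
  have hζ'int : IsIntegral ℤ ζ⁻¹ := hζ.inv.isIntegral (by omega)
  have hxint : IsIntegral ℤ ((-ζ) ^ k) := hζint.neg.pow k
  refine ℚ⟮ζ + ζ⁻¹⟯.exists_isUnit_integralClosure_of_mul_eq_one (w := ζ ^ k * S ^ 2)
    (add_mem (pow_add_pow_mem_of_mul_eq_one hζζ' (mem_adjoin_simple_self ℚ _) k)
      (mul_mem (pow_mem (neg_mem (one_mem _)) k) (ofNat_mem _ 2))) ?_ ?_ ?_
  · rw [pow_add_pow_add_neg_one_pow_mul_two hζζ']
    exact (hζ'int.pow k).mul ((isIntegral_one.add hxint).pow 2)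
  · exact (hζint.pow k).mul ((IsIntegral.sum _ fun i _ => (hxint.pow 2).pow i).pow 2)
  · rw [pow_add_pow_add_neg_one_pow_mul_two hζζ', mul_mul_mul_comm, ← mul_pow, ← mul_pow,
      inv_mul_cancel₀ hζ0, hS, one_pow, one_pow, one_mul]

/-- Let `p` be an odd prime, `ζ` a primitive `2p`-th root of unity (in a
field of characteristic zero), `γ := ζ + ζ⁻¹` and let `𝓞` be the ring of integers of `ℚ(γ)`
(realized as the integral closure of `ℤ` in `ℚ⟮γ⟯`).  For every integer `k` with
`0 < k < p`, the element `u_k := ζ^k + ζ^{-k} + (-1)^k·2` lies in `𝓞` and is a unit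
of `𝓞`. -/
theorem stmt1 {p : ℕ} (hp : p.Prime) (hodd : Odd p)
    {K : Type*} [Field K] [CharZero K]
    (ζ : K) (hζ : IsPrimitiveRoot ζ (2 * p))
    (k : ℕ) (hk0 : 0 < k) (hkp : k < p) :
    ∃ u : ↥(integralClosure ℤ ↥(ℚ⟮ζ + ζ⁻¹⟯)),
      ((u : ↥(ℚ⟮ζ + ζ⁻¹⟯)) : K) = ζ ^ k + ζ⁻¹ ^ k + (-1) ^ k * 2 ∧ IsUnit u :=
  stmt1_general hodd ζ hζ k hk0 hkp
end

section
/- For every reduced word I of the longest element w₀, one has Y_I • [e] = 𝟏 and Y_I • [w₀] = 𝟏; in other words, the Schubert class ζ_{w₀} and the special Schubert class σ_{w₀} both equal the fundamental class 𝟏. -/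
open scoped Classical

noncomputable section

namespace RootCtx

open MvPolynomial

/-- `S = Sym(V) = ℚ[α_i : i ∈ ι]`, the symmetric algebra of the span `V` of the root
system, written in the basis of simple roots (the variable `X i` *is* the simple root
`α_i`). -/
abbrev S (ι : Type) : Type := MvPolynomial ι ℚ

/-- `Q`, the fraction field of `S`. -/
abbrev Q (ι : Type) : Type := FractionRing (S ι)

variable {ι : Type} [Fintype ι] {W : Type} [Group W] [Fintype W]

/-- `x_Π := ∏_{α ∈ Φ⁺} (-α)`. -/
def xPi (P : Finset (S ι)) : S ι := ∏ a ∈ P, (-a)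

/-- The length of `w ∈ W`, as the number of positive roots sent to negative roots. -/
def len (φ : W →* (S ι ≃ₐ[ℚ] S ι)) (P : Finset (S ι)) (w : W) : ℕ :=
  Set.ncard {a : S ι | a ∈ P ∧ -(φ w a) ∈ P}

/-- `l` is a reduced word of `w`. -/
def IsRed (φ : W →* (S ι ≃ₐ[ℚ] S ι)) (P : Finset (S ι)) (sr : ι → W)
    (l : List ι) (w : W) : Prop :=
  (l.map sr).prod = w ∧ l.length = len φ P w

/-- The Hecke (push-pull) operator `Y_i`: `(Y_i • z)(v) = (z(v s_i) - z(v)) / v(α_i)`. -/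
def hecke (φ : W →* (S ι ≃ₐ[ℚ] S ι)) (sr : ι → W) (i : ι) (z : W → Q ι) : W → Q ι :=
  fun v => (z (v * sr i) - z v) / algebraMap (S ι) (Q ι) (φ v (X i))

/-- `Y_I • z = Y_{i₁} • (⋯ • (Y_{i_l} • z))` for `I = (i₁, …, i_l)`. -/
def heckeWord (φ : W →* (S ι ≃ₐ[ℚ] S ι)) (sr : ι → W) (l : List ι) (z : W → Q ι) :
    W → Q ι :=
  l.foldr (hecke φ sr) z

/-- The class `[u]` of the fixed point `u`, with `[u](u) = u(x_Π)` and all other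
components `0`. -/
def fixedPt (φ : W →* (S ι ≃ₐ[ℚ] S ι)) (P : Finset (S ι)) (u : W) : W → Q ι :=
  fun v => if v = u then algebraMap (S ι) (Q ι) (φ u (xPi P)) else 0

/-- The divided difference operator `X_i(f) = (f - s_i(f))/α_i` on the fraction field. -/
def dd (ψ : W →* RingAut (Q ι)) (sr : ι → W) (i : ι) (f : Q ι) : Q ι :=
  (f - ψ (sr i) f) / algebraMap (S ι) (Q ι) (X i)

/-- `X_I = X_{i₁} ∘ ⋯ ∘ X_{i_l}` for `I = (i₁, …, i_l)`. -/
def ddWord (ψ : W →* RingAut (Q ι)) (sr : ι → W) (l : List ι) (f : Q ι) : Q ι :=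
  l.foldr (dd ψ sr) f

/-- Membership in the structure algebra `Z`: for every positive root `a` (with associated
reflection `ref a`) and every `w`, `a` divides `z(s_a w) - z(w)` in `S`. -/
def inZ (ref : S ι → W) (P : Finset (S ι)) (z : W → S ι) : Prop :=
  ∀ a ∈ P, ∀ w : W, a ∣ (z (ref a * w) - z w)

/-- All the axioms of the setup: `Φ` is a reduced crystallographic finite root system
spanning `V` with simple roots the `X i` and positive roots `P`; `W` (a finite group) is
its Weyl group, acting faithfully on `S = Sym(V)` via `φ` (extended to the fraction field
`Q` via `ψ`), generated by the simple reflections `sr i`; `ref a` is the reflection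
attached to the (positive) root `a`. -/
structure IsRootCtx (φ : W →* (S ι ≃ₐ[ℚ] S ι)) (ψ : W →* RingAut (Q ι))
    (sr : ι → W) (ref : S ι → W) (P : Finset (S ι)) : Prop where
  /-- the action of `W` on `S` is faithful -/
  faithful : Function.Injective φ
  /-- the action on `Q` extends the action on `S` -/
  compat : ∀ (w : W) (f : S ι),
    ψ w (algebraMap (S ι) (Q ι) f) = algebraMap (S ι) (Q ι) (φ w f)
  /-- `W` is generated by the simple reflections -/
  gen : Subgroup.closure (Set.range sr) = ⊤
  /-- `0` is not a root -/
  zero_not_mem : (0 : S ι) ∉ P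
  /-- the simple roots are positive roots -/
  simple_mem : ∀ i, X i ∈ P
  /-- every positive root is a non-negative integral combination of the simple roots -/
  pos_nat : ∀ a ∈ P, ∃ c : ι → ℕ, a = ∑ i, (c i : ℚ) • X i
  /-- crystallographic condition: `s_i(α_j) = α_j - ⟨α_j, α_i^∨⟩ α_i` with integral
  Cartan coefficients -/
  cartan : ∀ i j, ∃ n : ℤ, φ (sr i) (X j) = X j - (n : ℚ) • X i
  /-- `s_i(α_i) = -α_i` -/
  simple_neg : ∀ i, φ (sr i) (X i) = - X i
  /-- `W` permutes the set `Φ = Φ⁺ ∪ (-Φ⁺)` of all roots -/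
  perm : ∀ (w : W), ∀ a ∈ P, φ w a ∈ P ∨ -(φ w a) ∈ P
  /-- `s_i` permutes `Φ⁺ \ {α_i}` -/
  simple_perm : ∀ i, ∀ a ∈ P, a ≠ X i → φ (sr i) a ∈ P
  /-- the root system is reduced -/
  reduced : ∀ a ∈ P, ∀ q : ℚ, q • a ∈ P → q = 1
  /-- reflections are involutions -/
  ref_invol : ∀ a ∈ P, ref a * ref a = 1
  /-- the reflection of a root `a` sends `a` to `-a` -/
  ref_neg : ∀ a ∈ P, φ (ref a) a = -a
  /-- the reflection of a root `a` is the identity modulo `a` -/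
  ref_div : ∀ a ∈ P, ∀ f : S ι, a ∣ (φ (ref a) f - f)
  /-- the reflection of a simple root is the corresponding simple reflection -/
  ref_simple : ∀ i, ref (X i) = sr i

/-- The (special/opposite, twisted) Schubert class `σ_w = Y_{R(w⁻¹)} • [w₀]` attached to a
choice `R` of reduced words. -/
def sigma (φ : W →* (S ι ≃ₐ[ℚ] S ι)) (sr : ι → W) (P : Finset (S ι)) (w0 : W)
    (R : W → List ι) (w : W) : W → Q ι :=
  heckeWord φ sr (R w⁻¹) (fixedPt φ P w0)

end RootCtx

/-!
Fix `u ∈ W`; we show `Y_I • [u] = 𝟏`. Every root divides `u(x_Π)`, so `[u]` lies in the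
structure algebra `Z` and its components are homogeneous of degree `|Φ⁺| = ℓ(w₀) = |I|`.
Each `Yᵢ` maps a class of `Z` homogeneous of degree `d + 1` to one of degree `d`: the edge
condition along `v — v sᵢ` makes the quotient a polynomial, and primality of the roots carries
the remaining edge conditions over. Hence `Y_I • [u]` is a constant of `Z`, i.e. the same
rational number at every `v`, since the simple reflections generate `W`. The value is read off at
`u w₀⁻¹`, where the support of the intermediate classes `Y_J • [u]` (contained in
`{v : ℓ(v⁻¹ u) ≤ |J|}`) leaves a single term at each step and the denominators multiply to
`u(x_Π)`.
-/

namespace MvPolynomial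

variable {σ K : Type*} [Field K]

theorem homogeneousComponent_mul_of_isHomogeneous_left {a : MvPolynomial σ K} {m : ℕ}
    (ha : a.IsHomogeneous m) (h : MvPolynomial σ K) (k : ℕ) :
    homogeneousComponent (m + k) (a * h) = a * homogeneousComponent k h := by
  classical
  let := MvPolynomial.gradedAlgebra (σ := σ) (R := K)
  have := DirectSum.coe_decompose_mul_of_left_mem_of_le (𝒜 := homogeneousSubmodule σ K)
    (b := h) ((mem_homogeneousSubmodule m a).mpr ha) (Nat.le_add_right m k)
  rw [Nat.add_sub_cancel_left] at this
  simpa [← decomposition.decompose'_apply] using this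

theorem IsHomogeneous.of_mul_left {a h : MvPolynomial σ K} {m n : ℕ}
    (ha : a.IsHomogeneous m) (ha0 : a ≠ 0) (hah : (a * h).IsHomogeneous (m + n)) :
    h.IsHomogeneous n := by
  intro d hd
  by_contra hdn
  replace hdn : d.degree ≠ n := fun h => hdn (by rw [← h, Finsupp.degree_eq_weight_one]; rfl)
  have hcomp : homogeneousComponent d.degree h ≠ 0 := by
    contrapose! hd
    simpa [coeff_homogeneousComponent] using congrArg (coeff d) hd
  apply hcomp
  have := homogeneousComponent_mul_of_isHomogeneous_left ha h d.degree
  rw [homogeneousComponent_of_mem ((mem_homogeneousSubmodule _ _).mpr hah),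
    if_neg (by omega)] at this
  exact (mul_eq_zero.mp this.symm).resolve_left ha0

theorem eq_C_of_isHomogeneous_zero {p : MvPolynomial σ K} (hp : p.IsHomogeneous 0) :
    p = C (coeff 0 p) := by
  rw [← homogeneousComponent_zero, homogeneousComponent_eq_self hp]

theorem prime_of_isHomogeneous_one {a : MvPolynomial σ K} (ha : a.IsHomogeneous 1)
    (ha0 : a ≠ 0) : Prime a := by
  refine (irreducible_of_totalDegree_eq_one (ha.totalDegree ha0) fun x hx => ?_).prime
  refine (isUnit_iff_ne_zero).mpr fun hx0 => ha0 ?_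
  ext d
  simpa [hx0] using hx d

theorem exists_eq_smul_of_dvd {a p : MvPolynomial σ K} (ha : a.IsHomogeneous 1) (ha0 : a ≠ 0)
    (hp : p.IsHomogeneous 1) (hdvd : a ∣ p) : ∃ q : K, p = q • a := by
  obtain ⟨h, rfl⟩ := hdvd
  have h0 : h.IsHomogeneous 0 := ha.of_mul_left ha0 hp
  exact ⟨coeff 0 h, by rw [smul_eq_C_mul, ← eq_C_of_isHomogeneous_zero h0, mul_comm]⟩

end MvPolynomial

namespace RootCtx

open MvPolynomial

section Action

variable {ι W : Type} [Group W] {φ : W →* (S ι ≃ₐ[ℚ] S ι)}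

theorem phi_mul_apply (u v : W) (p : S ι) : φ (u * v) p = φ u (φ v p) := by
  rw [map_mul, AlgEquiv.mul_apply]

theorem phi_one_apply (p : S ι) : φ 1 p = p := by
  rw [map_one, AlgEquiv.one_apply]

theorem phi_apply_inv_apply (w : W) (p : S ι) : φ w (φ w⁻¹ p) = p := by
  rw [← phi_mul_apply, mul_inv_cancel, phi_one_apply]

theorem phi_inv_apply_apply (w : W) (p : S ι) : φ w⁻¹ (φ w p) = p := by
  rw [← phi_mul_apply, inv_mul_cancel, phi_one_apply]

theorem heckeWord_cons (sr : ι → W) (i : ι) (l : List ι) (z : W → Q ι) :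
    heckeWord φ sr (i :: l) z = hecke φ sr i (heckeWord φ sr l z) := rfl

def invSet (φ : W →* (S ι ≃ₐ[ℚ] S ι)) (P : Finset (S ι)) (w : W) : Finset (S ι) :=
  P.filter fun a => -(φ w a) ∈ P

theorem mem_invSet {P : Finset (S ι)} {w : W} {a : S ι} :
    a ∈ invSet φ P w ↔ a ∈ P ∧ -(φ w a) ∈ P :=
  Finset.mem_filter

theorem len_eq_card_invSet (P : Finset (S ι)) (w : W) : len φ P w = (invSet φ P w).card := by
  rw [len, ← Set.ncard_coe_finset]
  congr 1
  ext a
  simp [invSet]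

end Action

section RootSystem

variable {ι : Type} [Fintype ι] {W : Type} [Group W] {φ : W →* (S ι ≃ₐ[ℚ] S ι)}
  {ψ : W →* RingAut (Q ι)} {sr : ι → W} {ref : S ι → W} {P : Finset (S ι)}

theorem IsRootCtx.sr_mul_self (hctx : IsRootCtx φ ψ sr ref P) (i : ι) : sr i * sr i = 1 := by
  rw [← hctx.ref_simple i]
  exact hctx.ref_invol _ (hctx.simple_mem i)

theorem IsRootCtx.sr_inv (hctx : IsRootCtx φ ψ sr ref P) (i : ι) : (sr i)⁻¹ = sr i :=
  inv_eq_of_mul_eq_one_right (hctx.sr_mul_self i)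

theorem IsRootCtx.neg_notMem (hctx : IsRootCtx φ ψ sr ref P) {a : S ι} (ha : a ∈ P) :
    -a ∉ P := by
  intro hna
  have := hctx.reduced (-a) hna (-1) (by rwa [neg_one_smul, neg_neg])
  norm_num at this

theorem IsRootCtx.ne_zero_of_mem (hctx : IsRootCtx φ ψ sr ref P) {a : S ι} (ha : a ∈ P) :
    a ≠ 0 :=
  fun h => hctx.zero_not_mem (h ▸ ha)

theorem IsRootCtx.isHomogeneous_of_mem (hctx : IsRootCtx φ ψ sr ref P) {a : S ι} (ha : a ∈ P) :
    a.IsHomogeneous 1 := by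
  obtain ⟨c, rfl⟩ := hctx.pos_nat a ha
  exact IsHomogeneous.sum _ _ _ fun i _ => by
    rw [smul_eq_C_mul]
    exact isHomogeneous_C_mul_X _ i

theorem IsRootCtx.prime_of_mem (hctx : IsRootCtx φ ψ sr ref P) {a : S ι} (ha : a ∈ P) :
    Prime a :=
  prime_of_isHomogeneous_one (hctx.isHomogeneous_of_mem ha) (hctx.ne_zero_of_mem ha)

theorem IsRootCtx.isHomogeneous_phi_of_mem (hctx : IsRootCtx φ ψ sr ref P) (w : W) {a : S ι}
    (ha : a ∈ P) : (φ w a).IsHomogeneous 1 := by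
  rcases hctx.perm w a ha with h | h
  · exact hctx.isHomogeneous_of_mem h
  · simpa using (hctx.isHomogeneous_of_mem h).neg

/-- On each linear form `k` adds a multiple of `a`; since `k a = a` these multiples accumulate
along the powers of `k`, which has finite order. -/
theorem IsRootCtx.eq_one_of_forall_dvd [Finite W] (hctx : IsRootCtx φ ψ sr ref P) {a : S ι}
    (ha : a ∈ P) {k : W} (hka : φ k a = a) (hdvd : ∀ f, a ∣ φ k f - f) : k = 1 := by
  have hX : ∀ j, φ k (X j) = X j := by
    intro j
    obtain ⟨q, hq⟩ := exists_eq_smul_of_dvd (hctx.isHomogeneous_of_mem ha)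
      (hctx.ne_zero_of_mem ha)
      ((hctx.isHomogeneous_phi_of_mem k (hctx.simple_mem j)).sub (isHomogeneous_X ℚ j))
      (hdvd (X j))
    rw [sub_eq_iff_eq_add'] at hq
    have hpow : ∀ m : ℕ, φ (k ^ m) (X j) = X j + ((m : ℚ) * q) • a := by
      intro m
      induction m with
      | zero => simp
      | succ m ih =>
        rw [pow_succ', phi_mul_apply, ih, map_add, map_smul, hka, hq]
        push_cast
        module
    have h := hpow (orderOf k)
    rw [pow_orderOf_eq_one, phi_one_apply, left_eq_add, smul_eq_zero] at h
    have hq0 : q = 0 := by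
      simpa [hctx.ne_zero_of_mem ha, (orderOf_pos k).ne'] using h
    rw [hq, hq0, zero_smul, add_zero]
  apply hctx.faithful
  rw [map_one]
  exact AlgEquiv.coe_toAlgHom_injective (algHom_ext fun j => by simpa using hX j)

theorem IsRootCtx.eq_ref_of_forall_dvd [Finite W] (hctx : IsRootCtx φ ψ sr ref P) {a : S ι}
    (ha : a ∈ P) {g : W} (hga : φ g a = -a) (hdvd : ∀ f, a ∣ φ g f - f) : g = ref a := by
  have h1 : ref a * g = 1 := by
    refine hctx.eq_one_of_forall_dvd ha ?_ fun f => ?_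
    · rw [phi_mul_apply, hga, map_neg, hctx.ref_neg a ha, neg_neg]
    · have heq : φ (ref a * g) f - f = (φ (ref a) (φ g f) - φ g f) + (φ g f - f) := by
        rw [phi_mul_apply]; ring
      rw [heq]
      exact dvd_add (hctx.ref_div a ha _) (hdvd f)
  rw [eq_inv_of_mul_eq_one_right h1, inv_eq_of_mul_eq_one_right (hctx.ref_invol a ha)]

theorem IsRootCtx.ref_mul_eq_mul_sr [Finite W] (hctx : IsRootCtx φ ψ sr ref P) {v : W} {i : ι}
    {b : S ι} (hb : b ∈ P) (hvb : φ v (X i) = b ∨ φ v (X i) = -b) :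
    ref b * v = v * sr i := by
  have hconj : ∀ p, φ (v * sr i * v⁻¹) (φ v p) = φ v (φ (sr i) p) := fun p => by
    rw [← phi_mul_apply, ← phi_mul_apply, inv_mul_cancel_right]
  have hdvd : b ∣ φ v (X i) := by
    rcases hvb with h | h <;> rw [h]
    exact dvd_neg.mpr dvd_rfl
  suffices v * sr i * v⁻¹ = ref b by rw [← this, inv_mul_cancel_right]
  refine hctx.eq_ref_of_forall_dvd hb ?_ fun f => ?_
  · have h := hconj (X i)
    rw [hctx.simple_neg, map_neg] at h
    rcases hvb with hv | hv
    · rwa [← hv]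
    · rw [← neg_eq_iff_eq_neg.mpr hv, map_neg, h]
  · have hXi : X i ∣ φ (sr i) (φ v⁻¹ f) - φ v⁻¹ f := by
      simpa [hctx.ref_simple i] using hctx.ref_div (X i) (hctx.simple_mem i) (φ v⁻¹ f)
    have heq : φ (v * sr i * v⁻¹) f - f = φ v (φ (sr i) (φ v⁻¹ f) - φ v⁻¹ f) := by
      rw [map_sub, ← hconj, phi_apply_inv_apply]
    rw [heq]
    exact hdvd.trans (map_dvd (φ v) hXi)

theorem IsRootCtx.ref_mul_eq_mul_sr_of_dvd [Finite W] (hctx : IsRootCtx φ ψ sr ref P) {a : S ι}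
    (ha : a ∈ P) {w : W} {i : ι} (hdvd : a ∣ φ w (X i)) : ref a * w = w * sr i := by
  obtain ⟨q, hq⟩ := exists_eq_smul_of_dvd (hctx.isHomogeneous_of_mem ha)
    (hctx.ne_zero_of_mem ha) (hctx.isHomogeneous_phi_of_mem w (hctx.simple_mem i)) hdvd
  refine hctx.ref_mul_eq_mul_sr ha ?_
  rcases hctx.perm w _ (hctx.simple_mem i) with h | h
  · left
    rw [hq, hctx.reduced a ha q (hq ▸ h), one_smul]
  · right
    have h1 := hctx.reduced a ha (-q) (by rwa [neg_smul, ← hq])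
    rw [hq, show q = -1 by linarith, neg_one_smul]

/-- `v sᵢ = s_b v` for the positive root `b = ±v(αᵢ)`. -/
theorem IsRootCtx.dvd_sub_of_inZ [Finite W] (hctx : IsRootCtx φ ψ sr ref P) {zh : W → S ι}
    (hZ : inZ ref P zh) (v : W) (i : ι) : φ v (X i) ∣ zh (v * sr i) - zh v := by
  rcases hctx.perm v _ (hctx.simple_mem i) with hb | hb
  · simpa [hctx.ref_mul_eq_mul_sr hb (Or.inl rfl)] using hZ _ hb v
  · have h := hZ _ hb v
    rw [hctx.ref_mul_eq_mul_sr hb (Or.inr (neg_neg _).symm)] at h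
    exact neg_dvd.mp h

theorem IsRootCtx.inZ_of_mul_eq_sub [Finite W] (hctx : IsRootCtx φ ψ sr ref P)
    {zh zh' : W → S ι} {i : ι} (hZ : inZ ref P zh)
    (hzh' : ∀ v, φ v (X i) * zh' v = zh (v * sr i) - zh v) :
    inZ ref P zh' := by
  intro a ha w
  by_cases hdvd : a ∣ φ w (X i)
  · -- `a = ±w(αᵢ)`, so `sₐ w = w sᵢ`, and the defining equations at `w` and `w sᵢ` force
    -- `zh' (w sᵢ) = zh' w`
    have hphi : φ (w * sr i) (X i) = -(φ w (X i)) := by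
      rw [phi_mul_apply, hctx.simple_neg, map_neg]
    have h1 := hzh' (w * sr i)
    rw [mul_assoc, hctx.sr_mul_self, mul_one, hphi] at h1
    have h2 : φ w (X i) * (zh' (w * sr i) - zh' w) = 0 := by
      linear_combination -h1 - hzh' w
    rw [hctx.ref_mul_eq_mul_sr_of_dvd ha hdvd,
      sub_eq_zero.mp ((mul_eq_zero.mp h2).resolve_left
        ((EmbeddingLike.map_ne_zero_iff).mpr (X_ne_zero i))), sub_self]
    exact dvd_zero a
  · -- `a` is prime and divides `w(αᵢ) (zh' (sₐ w) - zh' w)`, but not `w(αᵢ)`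
    refine ((hctx.prime_of_mem ha).dvd_or_dvd ?_).resolve_left hdvd
    have key : φ w (X i) * (zh' (ref a * w) - zh' w)
        = (φ w (X i) - φ (ref a) (φ w (X i))) * zh' (ref a * w)
          + ((zh (ref a * (w * sr i)) - zh (w * sr i)) - (zh (ref a * w) - zh w)) := by
      have h := hzh' (ref a * w)
      rw [phi_mul_apply, mul_assoc] at h
      linear_combination h - hzh' w
    rw [key]
    exact dvd_add ((dvd_sub_comm.mp (hctx.ref_div a ha _)).mul_right _)
      (dvd_sub (hZ a ha _) (hZ a ha w))

def IsHomogeneousZClass (ref : S ι → W) (P : Finset (S ι)) (d : ℕ) (z : W → Q ι) : Prop :=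
  ∃ zh : W → S ι, (∀ v, z v = algebraMap (S ι) (Q ι) (zh v)) ∧ inZ ref P zh ∧
    ∀ v, (zh v).IsHomogeneous d

theorem IsHomogeneousZClass.hecke [Finite W] (hctx : IsRootCtx φ ψ sr ref P) {d : ℕ}
    {z : W → Q ι} (hz : IsHomogeneousZClass ref P (d + 1) z) (i : ι) :
    IsHomogeneousZClass ref P d (hecke φ sr i z) := by
  obtain ⟨zh, hz, hZ, hhom⟩ := hz
  choose zh' hzh' using fun v => hctx.dvd_sub_of_inZ hZ v i
  have hne : ∀ v, φ v (X i) ≠ 0 := fun v => (EmbeddingLike.map_ne_zero_iff).mpr (X_ne_zero i)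
  refine ⟨zh', fun v => ?_, hctx.inZ_of_mul_eq_sub hZ fun v => (hzh' v).symm, fun v => ?_⟩
  · rw [RootCtx.hecke, hz, hz, ← map_sub, hzh' v, map_mul,
      mul_div_cancel_left₀ _ (IsFractionRing.to_map_eq_zero_iff.not.mpr (hne v))]
  · refine (hctx.isHomogeneous_phi_of_mem v (hctx.simple_mem i)).of_mul_left (hne v) ?_
    rw [← hzh' v, add_comm]
    exact (hhom _).sub (hhom _)

theorem IsHomogeneousZClass.heckeWord [Finite W] (hctx : IsRootCtx φ ψ sr ref P) {d : ℕ}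
    (l : List ι) {z : W → Q ι} (hz : IsHomogeneousZClass ref P (d + l.length) z) :
    IsHomogeneousZClass ref P d (heckeWord φ sr l z) := by
  induction l generalizing d with
  | nil => exact hz
  | cons i l ih =>
    rw [List.length_cons, ← add_assoc, add_right_comm] at hz
    exact (ih hz).hecke hctx i

/-- A root divides no nonzero constant, so the constants are invariant under the simple
reflections, which generate `W`. -/
theorem IsHomogeneousZClass.eq_of_degree_zero (hctx : IsRootCtx φ ψ sr ref P)
    {z : W → Q ι} (hz : IsHomogeneousZClass ref P 0 z) (v w : W) : z v = z w := by
  obtain ⟨zh, hz, hZ, hhom⟩ := hz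
  set c : W → ℚ := fun v => coeff 0 (zh v)
  have hzc : ∀ v, zh v = C (c v) := fun v => eq_C_of_isHomogeneous_zero (hhom v)
  have hsr : ∀ i w, c (sr i * w) = c w := by
    intro i w
    by_contra hne
    have h := hZ (X i) (hctx.simple_mem i) w
    rw [hctx.ref_simple, hzc, hzc, ← map_sub] at h
    exact (hctx.prime_of_mem (hctx.simple_mem i)).not_isUnit
      (isUnit_of_dvd_unit h ((sub_ne_zero.mpr hne).isUnit.map C))
  have hmul : ∀ g w, c (g * w) = c w := by
    intro g
    induction (hctx.gen ▸ Subgroup.mem_top g : g ∈ Subgroup.closure (Set.range sr))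
      using Subgroup.closure_induction with
    | mem x hx =>
      obtain ⟨i, rfl⟩ := hx
      exact hsr i
    | one => simp
    | mul x y _ _ hx hy => intro w; rw [mul_assoc, hx, hy]
    | inv x _ hx => intro w; rw [← hx, mul_inv_cancel_left]
  rw [hz, hz, hzc, hzc, ← hmul (v * w⁻¹) w, inv_mul_cancel_right]

theorem IsRootCtx.dvd_phi_xPi (hctx : IsRootCtx φ ψ sr ref P) (u : W) {a : S ι} (ha : a ∈ P) :
    a ∣ φ u (xPi P) := by
  have hdvd : ∀ b ∈ P, φ u b ∣ φ u (xPi P) := fun b hb =>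
    map_dvd _ (neg_dvd.mp (Finset.dvd_prod_of_mem (fun a => -a) hb))
  rcases hctx.perm u⁻¹ a ha with h | h <;> simpa [phi_apply_inv_apply] using hdvd _ h

theorem IsRootCtx.isHomogeneous_phi_xPi (hctx : IsRootCtx φ ψ sr ref P) (u : W) :
    (φ u (xPi P)).IsHomogeneous P.card := by
  rw [xPi, map_prod]
  simpa using IsHomogeneous.prod P _ (fun _ => 1)
    fun a ha => by simpa using (hctx.isHomogeneous_phi_of_mem u ha).neg

theorem IsRootCtx.isHomogeneousZClass_fixedPt (hctx : IsRootCtx φ ψ sr ref P) (u : W) :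
    IsHomogeneousZClass ref P P.card (fixedPt φ P u) := by
  refine ⟨fun v => if v = u then φ u (xPi P) else 0, fun v => ?_, fun a ha w => ?_,
    fun v => ?_⟩
  · by_cases hv : v = u <;> simp [fixedPt, hv]
  · dsimp only
    split_ifs <;> simp [hctx.dvd_phi_xPi u ha]
  · by_cases hv : v = u <;> simp [hv, hctx.isHomogeneous_phi_xPi u, isHomogeneous_zero]

theorem IsRootCtx.invSet_one (hctx : IsRootCtx φ ψ sr ref P) : invSet φ P 1 = ∅ :=
  Finset.filter_false_of_mem fun a ha => by
    rw [phi_one_apply]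
    exact hctx.neg_notMem ha

theorem IsRootCtx.notMem_invSet (hctx : IsRootCtx φ ψ sr ref P) (w : W) (i : ι) :
    φ w⁻¹ (X i) ∉ invSet φ P w := by
  rw [mem_invSet, phi_apply_inv_apply]
  exact fun h => hctx.neg_notMem (hctx.simple_mem i) h.2

theorem IsRootCtx.neg_phi_sr_mem_iff (hctx : IsRootCtx φ ψ sr ref P) (i : ι) {b : S ι}
    (hb : b ∈ P) : -(φ (sr i) b) ∈ P ↔ b = X i := by
  refine ⟨fun h => ?_, ?_⟩
  · by_contra hne
    exact hctx.neg_notMem (hctx.simple_perm i b hb hne) h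
  · rintro rfl
    rw [hctx.simple_neg, neg_neg]
    exact hctx.simple_mem i

theorem IsRootCtx.invSet_sr_mul (hctx : IsRootCtx φ ψ sr ref P) {w : W} {i : ι}
    (hγ : φ w⁻¹ (X i) ∈ P) :
    invSet φ P (sr i * w) = insert (φ w⁻¹ (X i)) (invSet φ P w) := by
  ext a
  rw [Finset.mem_insert, mem_invSet, mem_invSet, phi_mul_apply]
  constructor
  · rintro ⟨ha, hneg⟩
    rcases hctx.perm w a ha with hpos | hpos
    · left
      rw [← (hctx.neg_phi_sr_mem_iff i hpos).mp hneg, phi_inv_apply_apply]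
    · exact Or.inr ⟨ha, hpos⟩
  · rintro (rfl | ⟨ha, hneg⟩)
    · rw [phi_apply_inv_apply]
      exact ⟨hγ, (hctx.neg_phi_sr_mem_iff i (hctx.simple_mem i)).mpr rfl⟩
    · refine ⟨ha, ?_⟩
      have hne : -(φ w a) ≠ X i := fun h => by
        apply hctx.neg_notMem hγ
        rwa [← h, map_neg, phi_inv_apply_apply, neg_neg]
      simpa using hctx.simple_perm i _ hneg hne

theorem IsRootCtx.card_invSet_sr_mul (hctx : IsRootCtx φ ψ sr ref P) {w : W} {i : ι}
    (hγ : φ w⁻¹ (X i) ∈ P) : (invSet φ P (sr i * w)).card = (invSet φ P w).card + 1 := by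
  rw [hctx.invSet_sr_mul hγ, Finset.card_insert_of_notMem (hctx.notMem_invSet w i)]

theorem IsRootCtx.card_invSet_sr_mul_of_neg (hctx : IsRootCtx φ ψ sr ref P) {w : W} {i : ι}
    (hγ : -(φ w⁻¹ (X i)) ∈ P) :
    (invSet φ P (sr i * w)).card + 1 = (invSet φ P w).card := by
  have h : φ (sr i * w)⁻¹ (X i) ∈ P := by
    rwa [mul_inv_rev, phi_mul_apply, hctx.sr_inv, hctx.simple_neg, map_neg]
  rw [← hctx.card_invSet_sr_mul h, ← mul_assoc, hctx.sr_mul_self, one_mul]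

theorem IsRootCtx.card_invSet_sr_mul_le (hctx : IsRootCtx φ ψ sr ref P) (w : W) (i : ι) :
    (invSet φ P (sr i * w)).card ≤ (invSet φ P w).card + 1 := by
  rcases hctx.perm w⁻¹ _ (hctx.simple_mem i) with h | h
  · exact (hctx.card_invSet_sr_mul h).le
  · have := hctx.card_invSet_sr_mul_of_neg h
    omega

theorem IsRootCtx.card_invSet_le_card_invSet_sr_mul (hctx : IsRootCtx φ ψ sr ref P) (w : W)
    (i : ι) : (invSet φ P w).card ≤ (invSet φ P (sr i * w)).card + 1 := by
  simpa [← mul_assoc, hctx.sr_mul_self] using hctx.card_invSet_sr_mul_le (sr i * w) i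

theorem IsRootCtx.card_invSet_prod_le (hctx : IsRootCtx φ ψ sr ref P) (l : List ι) :
    (invSet φ P (l.map sr).prod).card ≤ l.length := by
  induction l with
  | nil => simp [hctx.invSet_one]
  | cons i l ih =>
    rw [List.map_cons, List.prod_cons, List.length_cons]
    exact (hctx.card_invSet_sr_mul_le _ i).trans (by omega)

theorem IsRootCtx.card_invSet_le_of_heckeWord_fixedPt_ne_zero (hctx : IsRootCtx φ ψ sr ref P)
    (u : W) (l : List ι) {v : W} (hv : heckeWord φ sr l (fixedPt φ P u) v ≠ 0) :
    (invSet φ P (v⁻¹ * u)).card ≤ l.length := by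
  induction l generalizing v with
  | nil =>
    have : v = u := by
      by_contra h
      exact hv (if_neg h)
    simp [this, hctx.invSet_one]
  | cons i l ih =>
    rw [heckeWord_cons, hecke] at hv
    rw [List.length_cons]
    by_cases h : heckeWord φ sr l (fixedPt φ P u) v = 0
    · rw [h, sub_zero] at hv
      have := ih (div_ne_zero_iff.mp hv).1
      rw [mul_inv_rev, hctx.sr_inv, mul_assoc] at this
      exact (hctx.card_invSet_le_card_invSet_sr_mul _ i).trans (by omega)
    · exact (ih h).trans (Nat.le_succ _)

/-- Along a reduced word, at `u w⁻¹` only one of the two terms of each `Yᵢ` survives (the other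
vanishes by `card_invSet_le_of_heckeWord_fixedPt_ne_zero`), and the denominators are the
`-u(a)` for the inversions `a` of `w`. -/
theorem IsRootCtx.heckeWord_fixedPt_mul_prod_inv (hctx : IsRootCtx φ ψ sr ref P) (u : W)
    (l : List ι) (hl : (invSet φ P (l.map sr).prod).card = l.length) :
    heckeWord φ sr l (fixedPt φ P u) (u * (l.map sr).prod⁻¹) *
        algebraMap (S ι) (Q ι) (φ u (∏ a ∈ invSet φ P (l.map sr).prod, -a)) =
      algebraMap (S ι) (Q ι) (φ u (xPi P)) := by
  induction l with
  | nil => simp [hctx.invSet_one, heckeWord, fixedPt]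
  | cons i l ih =>
    have hle := hctx.card_invSet_prod_le l
    rw [List.map_cons, List.prod_cons] at hl ⊢
    rw [List.length_cons] at hl
    set w := (l.map sr).prod
    have hγ : φ w⁻¹ (X i) ∈ P := by
      refine (hctx.perm w⁻¹ _ (hctx.simple_mem i)).resolve_right fun h => ?_
      have := hctx.card_invSet_sr_mul_of_neg h
      omega
    have hw : (invSet φ P w).card = l.length := by
      have := hctx.card_invSet_sr_mul hγ
      omega
    have hv : u * (sr i * w)⁻¹ = u * w⁻¹ * sr i := by
      rw [mul_inv_rev, hctx.sr_inv, mul_assoc]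
    have hzero : heckeWord φ sr l (fixedPt φ P u) (u * w⁻¹ * sr i) = 0 := by
      by_contra h
      have := hctx.card_invSet_le_of_heckeWord_fixedPt_ne_zero u l h
      rw [← hv, mul_inv_rev, inv_inv, inv_mul_cancel_right] at this
      omega
    have hden : φ (u * w⁻¹ * sr i) (X i) = -(φ u (φ w⁻¹ (X i))) := by
      rw [phi_mul_apply, hctx.simple_neg, map_neg, phi_mul_apply]
    have hne : algebraMap (S ι) (Q ι) (φ u (φ w⁻¹ (X i))) ≠ 0 :=
      IsFractionRing.to_map_eq_zero_iff.not.mpr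
        ((EmbeddingLike.map_ne_zero_iff).mpr (hctx.ne_zero_of_mem hγ))
    rw [hv, heckeWord_cons, hecke, mul_assoc, hctx.sr_mul_self, mul_one, hzero, sub_zero, hden,
      hctx.invSet_sr_mul hγ, Finset.prod_insert (hctx.notMem_invSet w i), ← ih hw]
    simp only [map_mul, map_neg]
    field_simp

theorem IsRootCtx.heckeWord_fixedPt_eq_one [Finite W] (hctx : IsRootCtx φ ψ sr ref P) {w0 : W}
    (hw0 : ∀ a ∈ P, -(φ w0 a) ∈ P) {l : List ι} (hl : IsRed φ P sr l w0) (u : W) :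
    heckeWord φ sr l (fixedPt φ P u) = fun _ => 1 := by
  obtain ⟨hprod, hlen⟩ := hl
  have hinv : invSet φ P w0 = P := Finset.filter_true_of_mem hw0
  rw [len_eq_card_invSet, hinv] at hlen
  have hdiag := hctx.heckeWord_fixedPt_mul_prod_inv u l (by rw [hprod, hinv, hlen])
  rw [hprod, hinv, show ∏ a ∈ P, -a = xPi P from rfl] at hdiag
  have hxPi : algebraMap (S ι) (Q ι) (φ u (xPi P)) ≠ 0 :=
    IsFractionRing.to_map_eq_zero_iff.not.mpr ((EmbeddingLike.map_ne_zero_iff).mpr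
      (Finset.prod_ne_zero_iff.mpr fun a ha => neg_ne_zero.mpr (hctx.ne_zero_of_mem ha)))
  have hone : heckeWord φ sr l (fixedPt φ P u) (u * w0⁻¹) = 1 :=
    mul_right_cancel₀ hxPi (hdiag.trans (one_mul _).symm)
  have hdeg0 : IsHomogeneousZClass ref P 0 (heckeWord φ sr l (fixedPt φ P u)) :=
    IsHomogeneousZClass.heckeWord hctx l <| by
      rw [zero_add, hlen]
      exact hctx.isHomogeneousZClass_fixedPt u
  funext v
  rw [hdeg0.eq_of_degree_zero hctx v (u * w0⁻¹), hone]

end RootSystem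

/-- For every reduced word `I` of the longest element `w₀` one has
`Y_I • [e] = 𝟏` and `Y_I • [w₀] = 𝟏`; i.e. the Schubert class `ζ_{w₀}` and the special
Schubert class `σ_{w₀}` both equal the fundamental class `𝟏`. -/
theorem stmt5 {ι : Type} [Fintype ι] {W : Type} [Group W] [Fintype W]
    (φ : W →* (S ι ≃ₐ[ℚ] S ι)) (ψ : W →* RingAut (Q ι))
    (sr : ι → W) (ref : S ι → W) (P : Finset (S ι))
    (hctx : IsRootCtx φ ψ sr ref P)
    (w0 : W) (hw0 : ∀ a ∈ P, -(φ w0 a) ∈ P)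
    (l : List ι) (hl : IsRed φ P sr l w0) :
    heckeWord φ sr l (fixedPt φ P 1) = (fun _ => 1) ∧
    heckeWord φ sr l (fixedPt φ P w0) = (fun _ => 1) :=
  ⟨hctx.heckeWord_fixedPt_eq_one hw0 hl 1, hctx.heckeWord_fixedPt_eq_one hw0 hl w0⟩

end RootCtx
end
end
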